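/- Let 1 ≤ r ≤ k, let X ∈ ℝ^{m×d} with m ≥ d have rank d, with singular value decomposition X = U D Vᵀ where U ∈ ℝ^{m×d} has orthonormal columns, D ∈ ℝ^{d×d} is diagonal with positive entries, and V ∈ ℝ^{d×d} is orthogonal. Let y_1,…,y_k ∈ ℝ^m, let α_1,…,α_k > 0, and set M = Σ_{i=1}^k α_i Uᵀ y_i y_iᵀ U ∈ ℝ^{d×d}. Assume the r-th largest eigenvalue of M is strictly greater than its (r+1)-th largest eigenvalue, and let Q_r ∈ ℝ^{d×r} be a matrix with orthonormal columns maximizing tr(QᵀMQ) over all Q ∈ ℝ^{d×r} with orthonormal columns. Then for every global minimizer (B*, A_1*, …, A_k*), over B ∈ ℝ^{d×r} and A_i ∈ ℝ^r, of the reweighted MTL objective Σ_{i=1}^k α_i ‖X B A_i − y_i‖², the column span of B* equals the column span of (XᵀX)^{-1} V D Q_r. -/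

import Mathlib

/-!
Write `X = U C` with `C = D Vᵀ` invertible and `zᵢ = Uᵀ yᵢ`. As `U` has orthonormal columns, the
objective at `(B, A)` is `∑ αᵢ ‖C B Aᵢ - zᵢ‖²` plus a constant, and `B ↦ C B` is a bijection.
If `P` has orthonormal columns spanning the column space of `W = C B`, the loss at `W` is at least
`∑ αᵢ ‖zᵢ‖² - tr(Pᵀ M P)` with `M = ∑ αᵢ zᵢ zᵢᵀ`, while `W = Q`, `Aᵢ = Qᵀ zᵢ` gives exactly
`∑ αᵢ ‖zᵢ‖² - tr(Qᵀ M Q)`. By Ky Fan's maximum principle both traces are at most the sum of the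
`r` largest eigenvalues of `M`, which `Q` attains, so `P` attains it as well. In an eigenbasis
the trace is `∑ⱼ λⱼ cⱼ` with weights `cⱼ ∈ [0, 1]` of total at most `r`, and the eigengap forces
`cⱼ = 1` on the top `r` eigenvalues and `cⱼ = 0` elsewhere: the columns of `P`, like those of `Q`,
span the top-`r` eigenspace. Hence `range (C B) = range Q`, so `range B = range (C⁻¹ Q)`, and
`C⁻¹ = (XᵀX)⁻¹ Cᵀ = (XᵀX)⁻¹ V D`.
-/

open Matrix BigOperators

/-- Euclidean norm of a vector in `ℝ^n`. -/
noncomputable def vnorm {n : ℕ} (v : Fin n → ℝ) : ℝ := Real.sqrt (∑ i, v i ^ 2)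

section Threshold

variable {ι : Type*} [Fintype ι] [DecidableEq ι] (T : Finset ι) (lam c : ι → ℝ) (t : ℝ)

theorem sum_sub_sum_mul_eq :
    ∑ j ∈ T, lam j - ∑ j, lam j * c j =
      ∑ j ∈ T, (lam j - t) * (1 - c j) + ∑ j ∈ Tᶜ, (t - lam j) * c j +
        t * (T.card - ∑ j, c j) := by
  rw [← Finset.sum_add_sum_compl T (fun j => lam j * c j),
    ← Finset.sum_add_sum_compl T c]
  simp only [sub_mul, mul_sub, Finset.sum_sub_distrib, mul_one, ← Finset.mul_sum,
    Finset.sum_const, nsmul_eq_mul]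
  ring

variable {T lam c t}

theorem sum_mul_le_sum_of_threshold (ht : 0 ≤ t) (hT : ∀ j ∈ T, t ≤ lam j)
    (hTc : ∀ j ∉ T, lam j ≤ t) (hc0 : ∀ j, 0 ≤ c j) (hc1 : ∀ j, c j ≤ 1)
    (hcs : ∑ j, c j ≤ T.card) :
    ∑ j, lam j * c j ≤ ∑ j ∈ T, lam j := by
  have h₁ : 0 ≤ ∑ j ∈ T, (lam j - t) * (1 - c j) :=
    Finset.sum_nonneg fun j hj => mul_nonneg (sub_nonneg.2 (hT j hj)) (sub_nonneg.2 (hc1 j))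
  have h₂ : 0 ≤ ∑ j ∈ Tᶜ, (t - lam j) * c j :=
    Finset.sum_nonneg fun j hj =>
      mul_nonneg (sub_nonneg.2 (hTc j (Finset.mem_compl.1 hj))) (hc0 j)
  have h₃ : 0 ≤ t * (T.card - ∑ j, c j) := mul_nonneg ht (sub_nonneg.2 hcs)
  linarith [sum_sub_sum_mul_eq T lam c t]

theorem eq_indicator_of_sum_mul_eq_of_threshold (ht : 0 ≤ t) (hT : ∀ j ∈ T, t < lam j)
    (hTc : ∀ j ∉ T, lam j ≤ t) (hc0 : ∀ j, 0 ≤ c j) (hc1 : ∀ j, c j ≤ 1)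
    (hcs : ∑ j, c j ≤ T.card) (heq : ∑ j, lam j * c j = ∑ j ∈ T, lam j) :
    (∀ j ∈ T, c j = 1) ∧ ∀ j ∉ T, c j = 0 := by
  have h₁ : ∀ j ∈ T, 0 ≤ (lam j - t) * (1 - c j) := fun j hj =>
    mul_nonneg (sub_nonneg.2 (hT j hj).le) (sub_nonneg.2 (hc1 j))
  have h₂ : 0 ≤ ∑ j ∈ Tᶜ, (t - lam j) * c j :=
    Finset.sum_nonneg fun j hj =>
      mul_nonneg (sub_nonneg.2 (hTc j (Finset.mem_compl.1 hj))) (hc0 j)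
  have h₃ : 0 ≤ t * (T.card - ∑ j, c j) := mul_nonneg ht (sub_nonneg.2 hcs)
  have hzero : ∑ j ∈ T, (lam j - t) * (1 - c j) = 0 := by
    linarith [sum_sub_sum_mul_eq T lam c t, Finset.sum_nonneg h₁]
  have hone : ∀ j ∈ T, c j = 1 := fun j hj => by
    have := (Finset.sum_eq_zero_iff_of_nonneg h₁).1 hzero j hj
    have := (mul_eq_zero.1 this).resolve_left (sub_ne_zero.2 (hT j hj).ne')
    linarith
  refine ⟨hone, ?_⟩
  -- the weights on `T` already exhaust the budget `∑ j, c j ≤ #T`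
  have hrest : ∑ j ∈ Tᶜ, c j ≤ 0 := by
    have := Finset.sum_add_sum_compl T c
    rw [Finset.sum_congr rfl hone, Finset.sum_const, nsmul_eq_mul, mul_one] at this
    linarith
  have hrest0 := le_antisymm hrest (Finset.sum_nonneg fun j _ => hc0 j)
  exact fun j hj =>
    (Finset.sum_eq_zero_iff_of_nonneg fun j _ => hc0 j).1 hrest0 j (Finset.mem_compl.2 hj)

end Threshold

theorem transpose_mulVec_single_one {n s : Type*} [Fintype n] [DecidableEq n] (Q : Matrix n s ℝ)
    (j : n) : Qᵀ *ᵥ Pi.single j 1 = Q j := by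
  rw [mulVec_single_one]
  rfl

section Frame

variable {n s : Type*} [Fintype n] [Fintype s] {Q : Matrix n s ℝ}

theorem dotProduct_self_nonneg (v : n → ℝ) : 0 ≤ v ⬝ᵥ v :=
  Finset.sum_nonneg fun i _ => mul_self_nonneg (v i)

theorem sub_dotProduct_sub_of_transpose_mul_self [DecidableEq s] (hQ : Qᵀ * Q = 1) (a : s → ℝ)
    (z : n → ℝ) :
    (Q *ᵥ a - z) ⬝ᵥ (Q *ᵥ a - z) =
      (a - Qᵀ *ᵥ z) ⬝ᵥ (a - Qᵀ *ᵥ z) + (z ⬝ᵥ z - (Qᵀ *ᵥ z) ⬝ᵥ (Qᵀ *ᵥ z)) := by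
  have hQa : (Q *ᵥ a) ⬝ᵥ (Q *ᵥ a) = a ⬝ᵥ a := by
    rw [← dotProduct_transpose_mulVec, mulVec_mulVec, hQ, one_mulVec]
  have hcross : z ⬝ᵥ (Q *ᵥ a) = a ⬝ᵥ (Qᵀ *ᵥ z) := (dotProduct_transpose_mulVec Q a z).symm
  simp only [sub_dotProduct, dotProduct_sub, hQa, dotProduct_comm (Q *ᵥ a) z, hcross,
    dotProduct_comm (Qᵀ *ᵥ z) a]
  ring

theorem dotProduct_row_self_le_one [DecidableEq n] [DecidableEq s] (hQ : Qᵀ * Q = 1) (j : n) :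
    Q j ⬝ᵥ Q j ≤ 1 := by
  have h := sub_dotProduct_sub_of_transpose_mul_self hQ (Q j) (Pi.single j 1)
  rw [transpose_mulVec_single_one Q, sub_self, dotProduct_zero, zero_add,
    single_dotProduct, Pi.single_eq_same, one_mul] at h
  linarith [dotProduct_self_nonneg (Q *ᵥ Q j - Pi.single j 1)]

theorem mulVec_row_eq_single_of_dotProduct_row_self_eq_one [DecidableEq n] [DecidableEq s]
    (hQ : Qᵀ * Q = 1) {j : n} (hj : Q j ⬝ᵥ Q j = 1) : Q *ᵥ Q j = Pi.single j 1 := by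
  have h := sub_dotProduct_sub_of_transpose_mul_self hQ (Q j) (Pi.single j 1)
  rw [transpose_mulVec_single_one Q, sub_self, dotProduct_zero, zero_add,
    single_dotProduct, Pi.single_eq_same, one_mul, hj, sub_self, dotProduct_self_eq_zero] at h
  exact sub_eq_zero.1 h

theorem sum_dotProduct_row_self [DecidableEq s] (hQ : Qᵀ * Q = 1) :
    ∑ j, Q j ⬝ᵥ Q j = Fintype.card s := by
  rw [← trace_one (n := s) (R := ℝ), ← hQ]
  simp only [trace, diag, mul_apply, transpose_apply, dotProduct]
  exact Finset.sum_comm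

theorem trace_transpose_mul_diagonal_mul [DecidableEq n] (lam : n → ℝ) :
    (Qᵀ * diagonal lam * Q).trace = ∑ j, lam j * (Q j ⬝ᵥ Q j) := by
  simp only [trace, diag, mul_apply, transpose_apply, diagonal_apply, mul_ite, mul_zero,
    Finset.sum_ite_eq', Finset.mem_univ, if_true, dotProduct, Finset.mul_sum]
  rw [Finset.sum_comm]
  exact Finset.sum_congr rfl fun j _ => Finset.sum_congr rfl fun t _ => by ring

variable [DecidableEq n] [DecidableEq s] {T : Finset n} {lam : n → ℝ} {t : ℝ}

theorem trace_transpose_mul_diagonal_mul_le (hQ : Qᵀ * Q = 1) (hs : Fintype.card s ≤ T.card)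
    (ht : 0 ≤ t) (hT : ∀ j ∈ T, t ≤ lam j) (hTc : ∀ j ∉ T, lam j ≤ t) :
    (Qᵀ * diagonal lam * Q).trace ≤ ∑ j ∈ T, lam j := by
  rw [trace_transpose_mul_diagonal_mul]
  refine sum_mul_le_sum_of_threshold ht hT hTc (fun j => dotProduct_self_nonneg _)
    (dotProduct_row_self_le_one hQ) ?_
  rw [sum_dotProduct_row_self hQ]
  exact_mod_cast hs

theorem range_mulVecLin_eq_span_of_trace_transpose_mul_diagonal_mul_eq (hQ : Qᵀ * Q = 1)
    (hs : Fintype.card s ≤ T.card) (ht : 0 ≤ t) (hT : ∀ j ∈ T, t < lam j)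
    (hTc : ∀ j ∉ T, lam j ≤ t) (heq : (Qᵀ * diagonal lam * Q).trace = ∑ j ∈ T, lam j) :
    LinearMap.range Q.mulVecLin = Submodule.span ℝ (Pi.basisFun ℝ n '' T) := by
  rw [trace_transpose_mul_diagonal_mul] at heq
  obtain ⟨hone, hzero⟩ := eq_indicator_of_sum_mul_eq_of_threshold ht hT hTc
    (fun j => dotProduct_self_nonneg _) (dotProduct_row_self_le_one hQ)
    (by rw [sum_dotProduct_row_self hQ]; exact_mod_cast hs) heq
  apply le_antisymm
  · rintro _ ⟨a, rfl⟩
    rw [(Pi.basisFun ℝ n).mem_span_image]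
    intro j hj
    by_contra hjT
    have hrow : Q j = 0 := dotProduct_self_eq_zero.1 (hzero j hjT)
    simp [Pi.basisFun_repr, mulVec, hrow] at hj
  · rw [Submodule.span_le]
    rintro _ ⟨j, hj, rfl⟩
    exact ⟨Q j, by
      rw [mulVecLin_apply, mulVec_row_eq_single_of_dotProduct_row_self_eq_one hQ (hone j hj),
        Pi.basisFun_apply]⟩

end Frame

theorem exists_transpose_mul_self_eq_one_and_range_eq {n r : Type*} [Fintype n] [Fintype r]
    (W : Matrix n r ℝ) :
    ∃ (s : ℕ) (P : Matrix n (Fin s) ℝ), s ≤ Fintype.card r ∧ Pᵀ * P = 1 ∧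
      LinearMap.range P.mulVecLin = LinearMap.range W.mulVecLin := by
  let L : EuclideanSpace ℝ n ≃ₗ[ℝ] (n → ℝ) := WithLp.linearEquiv 2 ℝ (n → ℝ)
  let S := (LinearMap.range W.mulVecLin).map L.symm.toLinearMap
  let b := stdOrthonormalBasis ℝ S
  refine ⟨Module.finrank ℝ S, of fun a t => (b t : EuclideanSpace ℝ n) a, ?_, ?_, ?_⟩
  · rw [LinearEquiv.finrank_map_eq, ← Module.finrank_fintype_fun_eq_card (R := ℝ)]
    exact LinearMap.finrank_range_le _
  · ext t u
    have h := orthonormal_iff_ite.1 b.orthonormal u t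
    rw [Submodule.coe_inner, EuclideanSpace.inner_eq_star_dotProduct] at h
    rw [mul_apply, one_apply]
    simp only [transpose_apply, of_apply]
    convert h using 1
    · simp [dotProduct]
    · simp [eq_comm]
  · have hcols : (of fun a t => (b t : EuclideanSpace ℝ n) a).col =
        (L : EuclideanSpace ℝ n →ₗ[ℝ] (n → ℝ)) ∘ S.subtype ∘ b := rfl
    rw [range_mulVecLin, hcols, Set.range_comp, Set.range_comp, Submodule.span_image,
      Submodule.span_image, ← b.coe_toBasis, b.toBasis.span_eq, Submodule.map_subtype_top]
    exact (Submodule.map_symm_eq_iff L).1 rfl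

section Hermitian

variable {n : Type*} [Fintype n] [DecidableEq n] {M : Matrix n n ℝ}

theorem Matrix.IsHermitian.transpose_eigenvectorUnitary_mul_self (hM : M.IsHermitian) :
    (hM.eigenvectorUnitary : Matrix n n ℝ)ᵀ * hM.eigenvectorUnitary = 1 := by
  simpa [star_eq_conjTranspose] using Unitary.coe_star_mul_self hM.eigenvectorUnitary

theorem Matrix.IsHermitian.eigenvectorUnitary_mul_transpose_self (hM : M.IsHermitian) :
    (hM.eigenvectorUnitary : Matrix n n ℝ) * (hM.eigenvectorUnitary : Matrix n n ℝ)ᵀ = 1 := by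
  simpa [star_eq_conjTranspose] using Unitary.coe_mul_star_self hM.eigenvectorUnitary

theorem Matrix.IsHermitian.transpose_eigenvectorUnitary_mul_mul (hM : M.IsHermitian) :
    (hM.eigenvectorUnitary : Matrix n n ℝ)ᵀ * M * hM.eigenvectorUnitary =
      diagonal hM.eigenvalues := by
  simpa [star_eq_conjTranspose] using hM.conjStarAlgAut_star_eigenvectorUnitary

theorem Matrix.IsHermitian.submatrix_eigenvectorUnitary_transpose_mul_self {ι : Type*}
    [DecidableEq ι] (hM : M.IsHermitian) (e : ι ↪ n) :
    ((hM.eigenvectorUnitary : Matrix n n ℝ).submatrix id e)ᵀ *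
      (hM.eigenvectorUnitary : Matrix n n ℝ).submatrix id e = 1 := by
  rw [transpose_submatrix, ← submatrix_mul _ _ _ _ _ Function.bijective_id,
    hM.transpose_eigenvectorUnitary_mul_self, submatrix_one_embedding]

theorem Matrix.IsHermitian.trace_submatrix_eigenvectorUnitary {ι : Type*} [Fintype ι]
    [DecidableEq ι] (hM : M.IsHermitian) (e : ι ↪ n) :
    (((hM.eigenvectorUnitary : Matrix n n ℝ).submatrix id e)ᵀ * M *
      (hM.eigenvectorUnitary : Matrix n n ℝ).submatrix id e).trace =
        ∑ i, hM.eigenvalues (e i) := by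
  have h := congrArg (Matrix.submatrix · e e) hM.transpose_eigenvectorUnitary_mul_mul
  simp only [submatrix_mul _ _ _ _ _ Function.bijective_id, submatrix_id_id,
    submatrix_diagonal_embedding] at h
  rw [transpose_submatrix, h, trace_diagonal]
  rfl

theorem Matrix.IsHermitian.transpose_mul_mul_eq {ι : Type*} (hM : M.IsHermitian)
    (Q : Matrix n ι ℝ) :
    Qᵀ * M * Q =
      ((hM.eigenvectorUnitary : Matrix n n ℝ)ᵀ * Q)ᵀ * diagonal hM.eigenvalues *
        ((hM.eigenvectorUnitary : Matrix n n ℝ)ᵀ * Q) := by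
  have hE (N : Matrix n ι ℝ) : (hM.eigenvectorUnitary : Matrix n n ℝ) *
      ((hM.eigenvectorUnitary : Matrix n n ℝ)ᵀ * N) = N := by
    rw [← Matrix.mul_assoc, hM.eigenvectorUnitary_mul_transpose_self, Matrix.one_mul]
  rw [← hM.transpose_eigenvectorUnitary_mul_mul, transpose_mul, transpose_transpose]
  simp only [Matrix.mul_assoc, hE]

theorem Matrix.IsHermitian.transpose_eigenvectorUnitary_mul_transpose_mul_self {ι : Type*}
    [Fintype ι] [DecidableEq ι] (hM : M.IsHermitian) {Q : Matrix n ι ℝ} (hQ : Qᵀ * Q = 1) :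
    ((hM.eigenvectorUnitary : Matrix n n ℝ)ᵀ * Q)ᵀ *
      ((hM.eigenvectorUnitary : Matrix n n ℝ)ᵀ * Q) = 1 := by
  rw [transpose_mul, transpose_transpose, Matrix.mul_assoc, ← Matrix.mul_assoc _ _ Q,
    hM.eigenvectorUnitary_mul_transpose_self, Matrix.one_mul, hQ]

variable {s : Type*} [Fintype s] [DecidableEq s] {Q : Matrix n s ℝ} {T : Finset n} {t : ℝ}

/-- Ky Fan's maximum principle. -/
theorem Matrix.IsHermitian.trace_transpose_mul_mul_le (hM : M.IsHermitian) (hQ : Qᵀ * Q = 1)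
    (hs : Fintype.card s ≤ T.card) (ht : 0 ≤ t) (hT : ∀ j ∈ T, t ≤ hM.eigenvalues j)
    (hTc : ∀ j ∉ T, hM.eigenvalues j ≤ t) :
    (Qᵀ * M * Q).trace ≤ ∑ j ∈ T, hM.eigenvalues j := by
  rw [hM.transpose_mul_mul_eq]
  exact trace_transpose_mul_diagonal_mul_le
    (hM.transpose_eigenvectorUnitary_mul_transpose_mul_self hQ) hs ht hT hTc

theorem Matrix.IsHermitian.range_mulVecLin_eq_of_trace_transpose_mul_mul_eq
    (hM : M.IsHermitian) (hQ : Qᵀ * Q = 1) (hs : Fintype.card s ≤ T.card) (ht : 0 ≤ t)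
    (hT : ∀ j ∈ T, t < hM.eigenvalues j) (hTc : ∀ j ∉ T, hM.eigenvalues j ≤ t)
    (heq : (Qᵀ * M * Q).trace = ∑ j ∈ T, hM.eigenvalues j) :
    LinearMap.range Q.mulVecLin =
      (Submodule.span ℝ (Pi.basisFun ℝ n '' T)).map
        (hM.eigenvectorUnitary : Matrix n n ℝ).mulVecLin := by
  rw [hM.transpose_mul_mul_eq] at heq
  have hQE : Q = (hM.eigenvectorUnitary : Matrix n n ℝ) *
      ((hM.eigenvectorUnitary : Matrix n n ℝ)ᵀ * Q) := by
    rw [← Matrix.mul_assoc, hM.eigenvectorUnitary_mul_transpose_self, Matrix.one_mul]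
  conv_lhs => rw [hQE, mulVecLin_mul, LinearMap.range_comp]
  rw [range_mulVecLin_eq_span_of_trace_transpose_mul_diagonal_mul_eq
    (hM.transpose_eigenvectorUnitary_mul_transpose_mul_self hQ) hs ht hT hTc heq]

end Hermitian

section LeastSquares

variable {n κ : Type*} [Fintype n] [Fintype κ]

theorem trace_transpose_mul_sum_vecMulVec_mul {s : Type*} [Fintype s] (Q : Matrix n s ℝ)
    (α : κ → ℝ) (z : κ → n → ℝ) :
    (Qᵀ * (∑ i, α i • vecMulVec (z i) (z i)) * Q).trace =
      ∑ i, α i * ((Qᵀ *ᵥ z i) ⬝ᵥ (Qᵀ *ᵥ z i)) := by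
  simp only [Matrix.mul_sum, Matrix.sum_mul, Matrix.mul_smul, Matrix.smul_mul, trace_sum,
    trace_smul, mul_vecMulVec, vecMulVec_mul, trace_vecMulVec, smul_eq_mul, ← mulVec_transpose]

noncomputable def weightedSqLoss {r : Type*} [Fintype r] (α : κ → ℝ) (z : κ → n → ℝ)
    (W : Matrix n r ℝ) (A : κ → r → ℝ) : ℝ :=
  ∑ i, α i * ((W *ᵥ A i - z i) ⬝ᵥ (W *ᵥ A i - z i))

variable {s r : Type*} [Fintype s] [DecidableEq s] [Fintype r] {α : κ → ℝ} {z : κ → n → ℝ}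
  {Q : Matrix n s ℝ}

theorem weightedSqLoss_transpose_mulVec (hQ : Qᵀ * Q = 1) :
    weightedSqLoss α z Q (fun i => Qᵀ *ᵥ z i) =
      ∑ i, α i * (z i ⬝ᵥ z i) - (Qᵀ * (∑ i, α i • vecMulVec (z i) (z i)) * Q).trace := by
  rw [trace_transpose_mul_sum_vecMulVec_mul, ← Finset.sum_sub_distrib]
  refine Finset.sum_congr rfl fun i _ => ?_
  rw [sub_dotProduct_sub_of_transpose_mul_self hQ, sub_self, dotProduct_zero, zero_add,
    mul_sub]

theorem sub_trace_le_weightedSqLoss (hα : ∀ i, 0 ≤ α i) (hQ : Qᵀ * Q = 1)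
    {W : Matrix n r ℝ} (hWQ : LinearMap.range W.mulVecLin ≤ LinearMap.range Q.mulVecLin)
    (A : κ → r → ℝ) :
    ∑ i, α i * (z i ⬝ᵥ z i) - (Qᵀ * (∑ i, α i • vecMulVec (z i) (z i)) * Q).trace ≤
      weightedSqLoss α z W A := by
  rw [trace_transpose_mul_sum_vecMulVec_mul, ← Finset.sum_sub_distrib]
  refine Finset.sum_le_sum fun i _ => ?_
  obtain ⟨a, ha⟩ := hWQ ⟨A i, rfl⟩
  have ha' : Q *ᵥ a = W *ᵥ A i := ha
  rw [← mul_sub]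
  refine mul_le_mul_of_nonneg_left ?_ (hα i)
  rw [← ha', sub_dotProduct_sub_of_transpose_mul_self hQ]
  linarith [dotProduct_self_nonneg (a - Qᵀ *ᵥ z i)]

end LeastSquares

theorem posSemidef_sum_smul_vecMulVec {n κ : Type*} [Fintype n] [Fintype κ] {α : κ → ℝ}
    (hα : ∀ i, 0 ≤ α i) (z : κ → n → ℝ) :
    (∑ i, α i • vecMulVec (z i) (z i)).PosSemidef :=
  posSemidef_sum _ fun i _ => by
    simpa using (posSemidef_vecMulVec_self_star (z i)).smul (hα i)

theorem range_mulVecLin_eq_of_weightedSqLoss_le {n κ ι : Type*} [Fintype n] [DecidableEq n]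
    [Fintype κ] [Fintype ι] [DecidableEq ι] {α : κ → ℝ} (hα : ∀ i, 0 ≤ α i)
    {z : κ → n → ℝ} {M : Matrix n n ℝ} (hMdef : M = ∑ i, α i • vecMulVec (z i) (z i))
    (hM : M.IsHermitian) {e : ι ↪ n} {j₀ : n}
    (he : ∀ i, hM.eigenvalues j₀ < hM.eigenvalues (e i))
    (hj₀ : ∀ j ∉ Set.range e, hM.eigenvalues j ≤ hM.eigenvalues j₀)
    {Q : Matrix n ι ℝ} (hQ : Qᵀ * Q = 1)
    (hQmax : ∀ Q' : Matrix n ι ℝ, Q'ᵀ * Q' = 1 → (Q'ᵀ * M * Q').trace ≤ (Qᵀ * M * Q).trace)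
    {W : Matrix n ι ℝ} {A : κ → ι → ℝ}
    (hmin : ∀ (W' : Matrix n ι ℝ) (A' : κ → ι → ℝ),
      weightedSqLoss α z W A ≤ weightedSqLoss α z W' A') :
    LinearMap.range W.mulVecLin = LinearMap.range Q.mulVecLin := by
  set T := Finset.univ.map e
  have hcard : Fintype.card ι = T.card := by simp [T]
  have hj₀0 : 0 ≤ hM.eigenvalues j₀ :=
    (hMdef ▸ posSemidef_sum_smul_vecMulVec hα z : M.PosSemidef).eigenvalues_nonneg j₀
  have hT : ∀ j ∈ T, hM.eigenvalues j₀ < hM.eigenvalues j := by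
    intro j hj
    obtain ⟨i, -, rfl⟩ := Finset.mem_map.1 hj
    exact he i
  have hTc : ∀ j ∉ T, hM.eigenvalues j ≤ hM.eigenvalues j₀ := fun j hj =>
    hj₀ j fun ⟨i, hi⟩ => hj (Finset.mem_map.2 ⟨i, Finset.mem_univ i, hi⟩)
  have hTle : ∀ j ∈ T, hM.eigenvalues j₀ ≤ hM.eigenvalues j := fun j hj => (hT j hj).le
  have hQtop : (Qᵀ * M * Q).trace = ∑ j ∈ T, hM.eigenvalues j := by
    refine le_antisymm (hM.trace_transpose_mul_mul_le hQ hcard.le hj₀0 hTle hTc) ?_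
    rw [Finset.sum_map, ← hM.trace_submatrix_eigenvectorUnitary e]
    exact hQmax _ (hM.submatrix_eigenvectorUnitary_transpose_mul_self e)
  obtain ⟨s, P, hs, hP, hPW⟩ := exists_transpose_mul_self_eq_one_and_range_eq W
  have hs' : Fintype.card (Fin s) ≤ T.card := by simpa [hcard] using hs
  -- the loss at `W` is squeezed between `‖z‖² - tr(PᵀMP)` and the loss at `(Q, Qᵀz)`
  have hPtop : (Pᵀ * M * P).trace = ∑ j ∈ T, hM.eigenvalues j := by
    refine le_antisymm (hM.trace_transpose_mul_mul_le hP hs' hj₀0 hTle hTc) ?_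
    have hlow := sub_trace_le_weightedSqLoss (z := z) hα hP hPW.ge A
    have hup := weightedSqLoss_transpose_mulVec (α := α) (z := z) hQ
    rw [← hMdef] at hlow hup
    linarith [hmin Q fun i => Qᵀ *ᵥ z i]
  rw [← hPW, hM.range_mulVecLin_eq_of_trace_transpose_mul_mul_eq hP hs' hj₀0 hT hTc hPtop,
    hM.range_mulVecLin_eq_of_trace_transpose_mul_mul_eq hQ hcard.le hj₀0 hT hTc hQtop]

theorem vnorm_sq {n : ℕ} (v : Fin n → ℝ) : vnorm v ^ 2 = v ⬝ᵥ v := by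
  rw [vnorm, Real.sq_sqrt (Finset.sum_nonneg fun i _ => sq_nonneg (v i))]
  simp only [dotProduct, sq]

theorem sum_mul_vnorm_sq_eq_weightedSqLoss_add {k m d r : ℕ} {U : Matrix (Fin m) (Fin d) ℝ}
    (hU : Uᵀ * U = 1) (C : Matrix (Fin d) (Fin d) ℝ) (α : Fin k → ℝ) (y : Fin k → Fin m → ℝ)
    (B : Matrix (Fin d) (Fin r) ℝ) (A : Fin k → Fin r → ℝ) :
    ∑ i, α i * vnorm (fun j => (U * C).mulVec (B.mulVec (A i)) j - y i j) ^ 2 =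
      weightedSqLoss α (fun i => Uᵀ *ᵥ y i) (C * B) A +
        ∑ i, α i * (y i ⬝ᵥ y i - (Uᵀ *ᵥ y i) ⬝ᵥ (Uᵀ *ᵥ y i)) := by
  rw [weightedSqLoss, ← Finset.sum_add_distrib]
  refine Finset.sum_congr rfl fun i _ => ?_
  rw [vnorm_sq, ← mul_add, ← sub_dotProduct_sub_of_transpose_mul_self hU, mulVec_mulVec,
    mulVec_mulVec, Matrix.mul_assoc]
  rfl

theorem weightedSqLoss_le_of_forall_sum_mul_vnorm_sq_le {k m d r : ℕ}
    {U : Matrix (Fin m) (Fin d) ℝ} (hU : Uᵀ * U = 1) {C G : Matrix (Fin d) (Fin d) ℝ}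
    (hGC : G * C = 1) {α : Fin k → ℝ} {y : Fin k → Fin m → ℝ} {B : Matrix (Fin d) (Fin r) ℝ}
    {A : Fin k → Fin r → ℝ}
    (hopt : ∀ (B' : Matrix (Fin d) (Fin r) ℝ) (A' : Fin k → Fin r → ℝ),
      ∑ i, α i * vnorm (fun j => (U * C).mulVec (B.mulVec (A i)) j - y i j) ^ 2 ≤
        ∑ i, α i * vnorm (fun j => (U * C).mulVec (B'.mulVec (A' i)) j - y i j) ^ 2)
    (W' : Matrix (Fin d) (Fin r) ℝ) (A' : Fin k → Fin r → ℝ) :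
    weightedSqLoss α (fun i => Uᵀ *ᵥ y i) (C * B) A ≤
      weightedSqLoss α (fun i => Uᵀ *ᵥ y i) W' A' := by
  have h := hopt (G * W') A'
  rwa [sum_mul_vnorm_sq_eq_weightedSqLoss_add hU, sum_mul_vnorm_sq_eq_weightedSqLoss_add hU,
    ← Matrix.mul_assoc, mul_eq_one_comm.1 hGC, Matrix.one_mul, add_le_add_iff_right] at h

theorem mul_diagonal_inv_mul_diagonal_mul_transpose {d : Type*} [Fintype d] [DecidableEq d]
    {D : d → ℝ} (hD : ∀ i, D i ≠ 0) {V : Matrix d d ℝ} (hV : Vᵀ * V = 1) :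
    V * diagonal D⁻¹ * (diagonal D * Vᵀ) = 1 := by
  rw [Matrix.mul_assoc, ← Matrix.mul_assoc (diagonal _), diagonal_mul_diagonal,
    show (fun i => D⁻¹ i * D i) = fun _ => 1 from funext fun i => inv_mul_cancel₀ (hD i),
    diagonal_one, Matrix.one_mul, mul_eq_one_comm.1 hV]

theorem inv_transpose_mul_self_mul_transpose {m n : Type*} [Fintype m] [Fintype n]
    [DecidableEq n] {U : Matrix m n ℝ} (hU : Uᵀ * U = 1) {C G : Matrix n n ℝ}
    (hGC : G * C = 1) : ((U * C)ᵀ * (U * C))⁻¹ * Cᵀ = G := by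
  have hCG : C * G = 1 := mul_eq_one_comm.1 hGC
  have hinv : ((U * C)ᵀ * (U * C))⁻¹ = G * Gᵀ := by
    refine inv_eq_right_inv ?_
    rw [transpose_mul, Matrix.mul_assoc Cᵀ, ← Matrix.mul_assoc Uᵀ, hU, Matrix.one_mul,
      Matrix.mul_assoc, ← Matrix.mul_assoc C, hCG, Matrix.one_mul, ← transpose_mul, hGC,
      transpose_one]
  rw [hinv, Matrix.mul_assoc, ← transpose_mul, hCG, transpose_one, Matrix.mul_one]

theorem exists_embedding_of_antitone_of_lt {d r : ℕ} (hrd : r < d) {f : Fin d → ℝ}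
    {σ : Equiv.Perm (Fin d)} (hσ : Antitone fun i => f (σ i))
    (hgap : f (σ ⟨r, hrd⟩) < f (σ ⟨r - 1, lt_of_le_of_lt (Nat.sub_le r 1) hrd⟩)) :
    ∃ e : Fin r ↪ Fin d,
      (∀ i, f (σ ⟨r, hrd⟩) < f (e i)) ∧ ∀ j ∉ Set.range e, f j ≤ f (σ ⟨r, hrd⟩) := by
  refine ⟨(Fin.castLEEmb hrd.le).trans σ.toEmbedding, fun i => hgap.trans_le (hσ ?_),
    fun j hj => ?_⟩
  · simp only [Fin.le_def, Fin.castLEEmb_apply, Fin.val_castLE]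
    omega
  · have hr : r ≤ σ.symm j := by
      by_contra! h
      exact hj ⟨⟨σ.symm j, h⟩, by simp⟩
    simpa using hσ (show (⟨r, hrd⟩ : Fin d) ≤ σ.symm j from hr)

theorem reweighted_mtl_optimal_span_general
    (k d r m : ℕ) (hrd : r < d)
    (X : Matrix (Fin m) (Fin d) ℝ)
    (U : Matrix (Fin m) (Fin d) ℝ) (hU : Uᵀ * U = 1)
    (Ddiag : Fin d → ℝ) (hD : ∀ i, 0 < Ddiag i)
    (V : Matrix (Fin d) (Fin d) ℝ) (hV : Vᵀ * V = 1)
    (hX : X = U * Matrix.diagonal Ddiag * Vᵀ)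
    (y : Fin k → Fin m → ℝ) (α : Fin k → ℝ) (hα : ∀ i, 0 < α i)
    (M : Matrix (Fin d) (Fin d) ℝ)
    (hMdef : M = ∑ i, α i • (Uᵀ * Matrix.vecMulVec (y i) (y i) * U))
    (hM : M.IsHermitian)
    (hgap : ∃ σ : Equiv.Perm (Fin d), Antitone (fun i => hM.eigenvalues (σ i)) ∧
      hM.eigenvalues (σ ⟨r, hrd⟩) <
        hM.eigenvalues (σ ⟨r - 1, lt_of_le_of_lt (Nat.sub_le r 1) hrd⟩))
    (Q : Matrix (Fin d) (Fin r) ℝ) (hQ : Qᵀ * Q = 1)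
    (hQmax : ∀ Q' : Matrix (Fin d) (Fin r) ℝ, Q'ᵀ * Q' = 1 →
      (Q'ᵀ * M * Q').trace ≤ (Qᵀ * M * Q).trace) :
    ∀ (B : Matrix (Fin d) (Fin r) ℝ) (A : Fin k → Fin r → ℝ),
      (∀ (B' : Matrix (Fin d) (Fin r) ℝ) (A' : Fin k → Fin r → ℝ),
        (∑ i, α i * vnorm (fun j => X.mulVec (B.mulVec (A i)) j - y i j) ^ 2) ≤
        (∑ i, α i * vnorm (fun j => X.mulVec (B'.mulVec (A' i)) j - y i j) ^ 2)) →
      LinearMap.range B.mulVecLin =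
        LinearMap.range ((Xᵀ * X)⁻¹ * (V * Matrix.diagonal Ddiag * Q)).mulVecLin := by
  intro B A hopt
  obtain ⟨C, G, hGC, hXC, hVD⟩ : ∃ C G : Matrix (Fin d) (Fin d) ℝ,
      G * C = 1 ∧ X = U * C ∧ V * diagonal Ddiag = Cᵀ :=
    ⟨diagonal Ddiag * Vᵀ, V * diagonal Ddiag⁻¹,
      mul_diagonal_inv_mul_diagonal_mul_transpose (fun i => (hD i).ne') hV,
      by rw [hX, Matrix.mul_assoc],
      by rw [transpose_mul, transpose_transpose, diagonal_transpose]⟩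
  rw [hXC] at hopt ⊢
  obtain ⟨σ, hσ, hσgap⟩ := hgap
  obtain ⟨e, he, hj₀⟩ := exists_embedding_of_antitone_of_lt hrd hσ hσgap
  have hrange : LinearMap.range (C * B).mulVecLin = LinearMap.range Q.mulVecLin :=
    range_mulVecLin_eq_of_weightedSqLoss_le (fun i => (hα i).le)
      (by simp only [hMdef, mul_vecMulVec, vecMulVec_mul, ← mulVec_transpose]) hM he hj₀ hQ
      hQmax (weightedSqLoss_le_of_forall_sum_mul_vnorm_sq_le hU hGC hopt)
  calc LinearMap.range B.mulVecLin = LinearMap.range (G * (C * B)).mulVecLin := by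
        rw [← Matrix.mul_assoc, hGC, Matrix.one_mul]
    _ = LinearMap.range (G * Q).mulVecLin := by
        rw [mulVecLin_mul G, mulVecLin_mul G, LinearMap.range_comp, LinearMap.range_comp, hrange]
    _ = _ := by rw [hVD, ← Matrix.mul_assoc, inv_transpose_mul_self_mul_transpose hU hGC]

/-- Proposition on reweighted MTL with common covariates: if
`X = U D Vᵀ` is an SVD of the full-rank data matrix, `M = Σᵢ αᵢ Uᵀ yᵢ yᵢᵀ U` has an
eigengap between its `r`-th and `(r+1)`-th largest eigenvalues, and `Q_r` maximizes
`tr(Qᵀ M Q)` over matrices with `r` orthonormal columns, then every global minimizer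
`B⋆` of the reweighted MTL objective has column span equal to that of
`(XᵀX)⁻¹ V D Q_r`. -/
theorem reweighted_mtl_optimal_span
    (k d r m : ℕ) (hr1 : 1 ≤ r) (hrk : r ≤ k) (hrd : r < d) (hmd : d ≤ m)
    (X : Matrix (Fin m) (Fin d) ℝ) (hrank : X.rank = d)
    (U : Matrix (Fin m) (Fin d) ℝ) (hU : Uᵀ * U = 1)
    (Ddiag : Fin d → ℝ) (hD : ∀ i, 0 < Ddiag i)
    (V : Matrix (Fin d) (Fin d) ℝ) (hV : Vᵀ * V = 1)
    (hX : X = U * Matrix.diagonal Ddiag * Vᵀ)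
    (y : Fin k → Fin m → ℝ) (α : Fin k → ℝ) (hα : ∀ i, 0 < α i)
    (M : Matrix (Fin d) (Fin d) ℝ)
    (hMdef : M = ∑ i, α i • (Uᵀ * Matrix.vecMulVec (y i) (y i) * U))
    (hM : M.IsHermitian)
    (hgap : ∃ σ : Equiv.Perm (Fin d), Antitone (fun i => hM.eigenvalues (σ i)) ∧
      hM.eigenvalues (σ ⟨r, hrd⟩) <
        hM.eigenvalues (σ ⟨r - 1, lt_of_le_of_lt (Nat.sub_le r 1) hrd⟩))
    (Q : Matrix (Fin d) (Fin r) ℝ) (hQ : Qᵀ * Q = 1)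
    (hQmax : ∀ Q' : Matrix (Fin d) (Fin r) ℝ, Q'ᵀ * Q' = 1 →
      (Q'ᵀ * M * Q').trace ≤ (Qᵀ * M * Q).trace) :
    ∀ (B : Matrix (Fin d) (Fin r) ℝ) (A : Fin k → Fin r → ℝ),
      (∀ (B' : Matrix (Fin d) (Fin r) ℝ) (A' : Fin k → Fin r → ℝ),
        (∑ i, α i * vnorm (fun j => X.mulVec (B.mulVec (A i)) j - y i j) ^ 2) ≤
        (∑ i, α i * vnorm (fun j => X.mulVec (B'.mulVec (A' i)) j - y i j) ^ 2)) →
      LinearMap.range B.mulVecLin =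
        LinearMap.range ((Xᵀ * X)⁻¹ * (V * Matrix.diagonal Ddiag * Q)).mulVecLin :=
  reweighted_mtl_optimal_span_general k d r m hrd X U hU Ddiag hD V hV hX y α hα M hMdef hM hgap Q
    hQ hQmax
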